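/- arXiv:0802.0954 — 3 statements merged into one kernel-verified Lean document; each statement's English description precedes it below -/
import Mathlib

section
/- Let (C, σ) be a category with involution such that C has all small limits and all small colimits. Then the skewed category σ # C has all small limits and all small colimits. -/
/-
The forgetful functor `σ # C ⥤ C` creates limits and colimits. Since `σ` is an equivalence, it
preserves the limit `L` of the underlying diagram, so the twists `w_j` of the diagram induce a
unique `w : L ⟶ σ L` compatible with the projections; its "square" `σ w ≫ w` commutes with the
maps `σ π_j` because each `σ w_j ≫ w_j` is the identity, hence `w` is of order two. Colimits are
dual.
-/

open CategoryTheory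

universe v u v₂ u₂ v₃ u₃

namespace SkewTest

variable {C : Type u} [Category.{v} C]

/-- For an involution `σ` (a functor with `σ ⋙ σ = 𝟭 C`), `σ.obj (σ.obj X) = X`. -/
theorem sq_obj (σ : C ⥤ C) (hσ : σ ⋙ σ = 𝟭 C) (X : C) : σ.obj (σ.obj X) = X :=
  Functor.congr_obj hσ X

/-- Objects of the skewed category of a category with involution `(C, σ)`:
maps of order two `w : A ⟶ σ A`. -/
structure SkewObj (σ : C ⥤ C) (hσ : σ ⋙ σ = 𝟭 C) where
  pt : C
  tw : pt ⟶ σ.obj pt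
  order_two : σ.map tw ≫ eqToHom (sq_obj σ hσ pt) ≫ tw = 𝟙 (σ.obj pt)

/-- Morphisms of the skewed category. -/
@[ext]
structure SkewHom {σ : C ⥤ C} {hσ : σ ⋙ σ = 𝟭 C} (X Y : SkewObj σ hσ) where
  hom : X.pt ⟶ Y.pt
  comm : hom ≫ Y.tw = X.tw ≫ σ.map hom

instance skewCategory (σ : C ⥤ C) (hσ : σ ⋙ σ = 𝟭 C) : Category (SkewObj σ hσ) where
  Hom := SkewHom
  id X := ⟨𝟙 X.pt, by simp⟩
  comp f g := ⟨f.hom ≫ g.hom, by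
    rw [Category.assoc, g.comm, ← Category.assoc, f.comm, Category.assoc, ← Functor.map_comp]⟩
  id_comp f := SkewHom.ext (Category.id_comp f.hom)
  comp_id f := SkewHom.ext (Category.comp_id f.hom)
  assoc f g h := SkewHom.ext (Category.assoc f.hom g.hom h.hom)

@[simp] theorem SkewHom.id_hom {σ : C ⥤ C} {hσ : σ ⋙ σ = 𝟭 C} (X : SkewObj σ hσ) :
    SkewHom.hom (𝟙 X) = 𝟙 X.pt := rfl

@[simp] theorem SkewHom.comp_hom {σ : C ⥤ C} {hσ : σ ⋙ σ = 𝟭 C} {X Y Z : SkewObj σ hσ}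
    (f : X ⟶ Y) (g : Y ⟶ Z) : SkewHom.hom (f ≫ g) = f.hom ≫ g.hom := rfl

/-- The projection functor `ℙ : σ # C ⥤ C`. -/
def skewProj (σ : C ⥤ C) (hσ : σ ⋙ σ = 𝟭 C) : SkewObj σ hσ ⥤ C where
  obj X := X.pt
  map f := f.hom

end SkewTest

open CategoryTheory.Limits

namespace SkewTest

universe w w'

variable {C : Type u} [Category.{v} C]

theorem isEquivalence_of_involutive (σ : C ⥤ C) (hσ : σ ⋙ σ = 𝟭 C) : σ.IsEquivalence :=
  (CategoryTheory.Equivalence.mk σ σ (eqToIso hσ.symm) (eqToIso hσ)).isEquivalence_functor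

theorem map_map_comp_eqToHom (σ : C ⥤ C) (hσ : σ ⋙ σ = 𝟭 C) {X Y : C} (f : X ⟶ Y) :
    σ.map (σ.map f) ≫ eqToHom (sq_obj σ hσ Y) = eqToHom (sq_obj σ hσ X) ≫ f := by
  rw [show σ.map (σ.map f) = (σ ⋙ σ).map f from rfl, Functor.congr_hom hσ f]
  simp

/-- The square `σ t ≫ t` of a twist is natural along maps commuting with the twists. -/
theorem twist_square_comp_map (σ : C ⥤ C) (hσ : σ ⋙ σ = 𝟭 C) {X Y : C}
    {t : X ⟶ σ.obj X} {u : Y ⟶ σ.obj Y} (f : X ⟶ Y) (hf : f ≫ u = t ≫ σ.map f) :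
    (σ.map t ≫ eqToHom (sq_obj σ hσ X) ≫ t) ≫ σ.map f =
      σ.map f ≫ σ.map u ≫ eqToHom (sq_obj σ hσ Y) ≫ u := by
  calc (σ.map t ≫ eqToHom (sq_obj σ hσ X) ≫ t) ≫ σ.map f
      = σ.map t ≫ (eqToHom (sq_obj σ hσ X) ≫ f) ≫ u := by simp only [Category.assoc, hf]
    _ = σ.map (t ≫ σ.map f) ≫ eqToHom (sq_obj σ hσ Y) ≫ u := by
      rw [← map_map_comp_eqToHom σ hσ]; simp only [Functor.map_comp, Category.assoc]
    _ = σ.map f ≫ σ.map u ≫ eqToHom (sq_obj σ hσ Y) ≫ u := by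
      rw [← hf]; simp only [Functor.map_comp, Category.assoc]

theorem twist_square_comp_map_of_order_two {σ : C ⥤ C} {hσ : σ ⋙ σ = 𝟭 C} {X : C}
    {t : X ⟶ σ.obj X} (Y : SkewObj σ hσ) (f : X ⟶ Y.pt) (hf : f ≫ Y.tw = t ≫ σ.map f) :
    (σ.map t ≫ eqToHom (sq_obj σ hσ X) ≫ t) ≫ σ.map f = σ.map f := by
  rw [twist_square_comp_map σ hσ f hf, Y.order_two, Category.comp_id]

theorem map_comp_twist_square_of_order_two {σ : C ⥤ C} {hσ : σ ⋙ σ = 𝟭 C} {Y : C}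
    {u : Y ⟶ σ.obj Y} (X : SkewObj σ hσ) (f : X.pt ⟶ Y) (hf : f ≫ u = X.tw ≫ σ.map f) :
    σ.map f ≫ σ.map u ≫ eqToHom (sq_obj σ hσ Y) ≫ u = σ.map f := by
  rw [← twist_square_comp_map σ hσ f hf, X.order_two, Category.id_comp]

variable {σ : C ⥤ C} {hσ : σ ⋙ σ = 𝟭 C}

instance : (skewProj σ hσ).Faithful where
  map_injective h := SkewHom.ext h

def skewTw : skewProj σ hσ ⟶ skewProj σ hσ ⋙ σ where
  app X := X.tw
  naturality _ _ f := f.comm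

theorem comp_tw_comp_map_of_comp_eq {X Y Z : SkewObj σ hσ} (f : X.pt ⟶ Y.pt) (p : Y ⟶ Z)
    (q : X ⟶ Z) (h : f ≫ p.hom = q.hom) :
    (f ≫ Y.tw) ≫ σ.map p.hom = (X.tw ≫ σ.map f) ≫ σ.map p.hom := by
  rw [Category.assoc, ← p.comm, ← Category.assoc, h, q.comm, Category.assoc, ← σ.map_comp, h]

theorem hom_comp_comp_tw_of_comp_eq {X Y Z : SkewObj σ hσ} (f : X.pt ⟶ Y.pt) (p : Z ⟶ X)
    (q : Z ⟶ Y) (h : p.hom ≫ f = q.hom) :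
    p.hom ≫ f ≫ Y.tw = p.hom ≫ X.tw ≫ σ.map f := by
  rw [← Category.assoc, h, q.comm, ← h, σ.map_comp, ← Category.assoc, ← p.comm, Category.assoc]

variable {J : Type w} [Category.{w'} J] {F : J ⥤ SkewObj σ hσ}

section Limits

noncomputable def isLimitOfIsLimitMapCone (d : Cone F)
    (hd : IsLimit ((skewProj σ hσ).mapCone d)) : IsLimit d :=
  have := isEquivalence_of_involutive σ hσ
  IsLimit.ofFaithful (skewProj σ hσ) hd
    (fun s => ⟨hd.lift ((skewProj σ hσ).mapCone s), (isLimitOfPreserves σ hd).hom_ext fun j =>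
      comp_tw_comp_map_of_comp_eq _ (d.π.app j) (s.π.app j)
        (hd.fac ((skewProj σ hσ).mapCone s) j)⟩)
    fun _ => rfl

noncomputable def liftCone (c : Cone (F ⋙ skewProj σ hσ)) (hc : IsLimit c) : Cone F :=
  have := isEquivalence_of_involutive σ hσ
  let hσc := isLimitOfPreserves σ hc
  let tw := hσc.lift ((Cone.postcompose (Functor.whiskerLeft F skewTw)).obj c)
  have fac j : tw ≫ σ.map (c.π.app j) = c.π.app j ≫ (F.obj j).tw := hσc.fac _ j
  { pt :=
      { pt := c.pt
        tw := tw
        order_two := hσc.hom_ext fun j =>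
          (twist_square_comp_map_of_order_two (F.obj j) _ (fac j).symm).trans
            (Category.id_comp _).symm }
    π.app j := ⟨c.π.app j, (fac j).symm⟩
    π.naturality _ _ u := SkewHom.ext <| (Category.id_comp _).trans (c.w u).symm }

noncomputable instance : CreatesLimitsOfSize.{w, w'} (skewProj σ hσ) where
  CreatesLimitsOfShape.CreatesLimit :=
    { reflects hd := ⟨isLimitOfIsLimitMapCone _ hd⟩
      lifts c hc := ⟨liftCone c hc, Cone.ext (Iso.refl _) fun _ => (Category.id_comp _).symm⟩ }

end Limits

section Colimits

noncomputable def isColimitOfIsColimitMapCocone (d : Cocone F)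
    (hd : IsColimit ((skewProj σ hσ).mapCocone d)) : IsColimit d :=
  IsColimit.ofFaithful (skewProj σ hσ) hd
    (fun s => ⟨hd.desc ((skewProj σ hσ).mapCocone s), hd.hom_ext fun j =>
      hom_comp_comp_tw_of_comp_eq _ (d.ι.app j) (s.ι.app j)
        (hd.fac ((skewProj σ hσ).mapCocone s) j)⟩)
    fun _ => rfl

noncomputable def liftCocone (c : Cocone (F ⋙ skewProj σ hσ)) (hc : IsColimit c) : Cocone F :=
  have := isEquivalence_of_involutive σ hσ
  let tw := hc.desc ((Cocone.precompose (Functor.whiskerLeft F skewTw)).obj (σ.mapCocone c))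
  have fac j : c.ι.app j ≫ tw = (F.obj j).tw ≫ σ.map (c.ι.app j) := hc.fac _ j
  { pt :=
      { pt := c.pt
        tw := tw
        order_two := (isColimitOfPreserves σ hc).hom_ext fun j =>
          (map_comp_twist_square_of_order_two (F.obj j) _ (fac j)).trans
            (Category.comp_id _).symm }
    ι.app j := ⟨c.ι.app j, fac j⟩
    ι.naturality _ _ u := SkewHom.ext <| (c.w u).trans (Category.comp_id _).symm }

noncomputable instance : CreatesColimitsOfSize.{w, w'} (skewProj σ hσ) where
  CreatesColimitsOfShape.CreatesColimit :=
    { reflects hd := ⟨isColimitOfIsColimitMapCocone _ hd⟩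
      lifts c hc := ⟨liftCocone c hc, Cocone.ext (Iso.refl _) fun _ => Category.comp_id _⟩ }

end Colimits

end SkewTest

open SkewTest CategoryTheory.Limits in
/-- **Statement 4.** If `(C, σ)` is a category with involution and `C` has all small limits
and all small colimits, then the skewed category `σ # C` has all small limits and all
small colimits. -/
theorem skewed_hasLimits_hasColimits {C : Type u} [Category.{v} C]
    (σ : C ⥤ C) (hσ : σ ⋙ σ = 𝟭 C) [HasLimits C] [HasColimits C] :
    HasLimits (SkewObj σ hσ) ∧ HasColimits (SkewObj σ hσ) :=
  ⟨hasLimits_of_hasLimits_createsLimits (skewProj σ hσ),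
    hasColimits_of_hasColimits_createsColimits (skewProj σ hσ)⟩
end

section
/- Let (F, G, η, ε) be an adjunction (F left adjoint to G) between categories with involution (C, σ) and (D, τ). Then there exists a natural transformation α : Fσ → τF with τα ∘ ασ = id_F if and only if there exists a natural transformation β : Gτ → σG with σβ ∘ βτ = id_G. -/
open CategoryTheory

universe v u v₂ u₂ v₃ u₃

/-!
Because `σ ⋙ σ = 𝟭`, the functor `σ` is adjoint to itself with identity unit and counit, and
likewise `τ`. Composing with `F ⊣ G` gives adjunctions `σ ⋙ F ⊣ G ⋙ σ` and `F ⋙ τ ⊣ τ ⋙ G`, so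
taking conjugates is a bijection between transformations `α : σ ⋙ F ⟶ F ⋙ τ` and
`β : τ ⋙ G ⟶ G ⋙ σ`. Conjugation reverses composition, exchanges whiskering on the left and on
the right, and sends identities to identities; hence it sends `τα ∘ ασ` to `σβ ∘ βτ` and `id_F`
to `id_G`, and the two conditions correspond.
-/

open Functor

namespace CategoryTheory

section Conjugates

variable {B C D E : Type*} [Category B] [Category C] [Category D] [Category E]

theorem Adjunction.comp_assoc {L₁ : B ⥤ C} {R₁ : C ⥤ B} {L₂ : C ⥤ D} {R₂ : D ⥤ C}
    {L₃ : D ⥤ E} {R₃ : E ⥤ D} (adj₁ : L₁ ⊣ R₁) (adj₂ : L₂ ⊣ R₂) (adj₃ : L₃ ⊣ R₃) :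
    adj₁.comp (adj₂.comp adj₃) = (adj₁.comp adj₂).comp adj₃ := by
  ext X
  simp [Adjunction.comp_unit_app]

theorem conjugateEquiv_eqToHom {L₁ L₂ : C ⥤ D} {R₁ R₂ : D ⥤ C} (adj₁ : L₁ ⊣ R₁)
    (adj₂ : L₂ ⊣ R₂) (hL : L₂ = L₁) (hR : R₁ = R₂)
    (hunit : adj₂.unit = adj₁.unit ≫ eqToHom (by rw [hL, hR])) :
    conjugateEquiv adj₁ adj₂ (eqToHom hL) = eqToHom hR := by
  subst hL hR
  obtain rfl : adj₁ = adj₂ := Adjunction.ext (by simpa using hunit.symm)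
  simp

theorem conjugateEquiv_whiskerLeft_comp_whiskerRight {σ σ' : C ⥤ C} {τ τ' : D ⥤ D}
    {F : C ⥤ D} {G : D ⥤ C} (a : σ ⊣ σ') (b : τ ⊣ τ') (adj : F ⊣ G) (α : σ ⋙ F ⟶ F ⋙ τ) :
    conjugateEquiv ((adj.comp b).comp b) (a.comp (a.comp adj))
        (whiskerLeft σ α ≫ whiskerRight α τ) =
      whiskerLeft τ' (conjugateEquiv (adj.comp b) (a.comp adj) α) ≫
        whiskerRight (conjugateEquiv (adj.comp b) (a.comp adj) α) σ' := by
  rw [← conjugateEquiv_comp _ (a.comp (adj.comp b)), conjugateEquiv_whiskerLeft,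
    Adjunction.comp_assoc, conjugateEquiv_whiskerRight]

end Conjugates

section Involution

open SkewTest

variable {C D : Type*} [Category C] [Category D]

theorem involution_comp_comp_eq {σ : C ⥤ C} (hσ : σ ⋙ σ = 𝟭 C) {τ : D ⥤ D}
    (hτ : τ ⋙ τ = 𝟭 D) (F : C ⥤ D) : σ ⋙ σ ⋙ F = (F ⋙ τ) ⋙ τ := by
  rw [← Functor.assoc, hσ, Functor.assoc, hτ, Functor.id_comp, Functor.comp_id]

def Adjunction.ofInvolution (σ : C ⥤ C) (hσ : σ ⋙ σ = 𝟭 C) : σ ⊣ σ :=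
  Adjunction.mkOfUnitCounit
    { unit := eqToHom hσ.symm
      counit := eqToHom hσ
      left_triangle := by ext; simp [eqToHom_map]
      right_triangle := by ext; simp [eqToHom_map] }

theorem map_map_of_involution (σ : C ⥤ C) (hσ : σ ⋙ σ = 𝟭 C) {X Y : C} (f : X ⟶ Y) :
    σ.map (σ.map f) = eqToHom (sq_obj σ hσ X) ≫ f ≫ eqToHom (sq_obj σ hσ Y).symm := by
  simpa using Functor.congr_hom hσ f

theorem conjugateEquiv_ofInvolution_comp_eqToHom (σ : C ⥤ C) (hσ : σ ⋙ σ = 𝟭 C)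
    {F : C ⥤ D} {G : D ⥤ C} (adj : F ⊣ G) :
    conjugateEquiv adj
        ((Adjunction.ofInvolution σ hσ).comp ((Adjunction.ofInvolution σ hσ).comp adj))
        (eqToHom (by rw [← Functor.assoc, hσ, Functor.id_comp])) =
      eqToHom (by rw [Functor.assoc, hσ, Functor.comp_id]) := by
  refine conjugateEquiv_eqToHom _ _ _ _ ?_
  ext X
  simp only [id_obj, comp_obj, Adjunction.ofInvolution, Adjunction.comp_unit_app,
    Adjunction.mkOfUnitCounit_unit, eqToHom_app, map_comp, eqToHom_map,
    map_map_of_involution σ hσ, eqToHom_trans_assoc, eqToHom_refl, Category.id_comp,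
    NatTrans.comp_app]
  rw [NatTrans.congr adj.unit (sq_obj σ hσ X)]
  simp [eqToHom_map]

theorem conjugateEquiv_comp_ofInvolution_eqToHom (τ : D ⥤ D) (hτ : τ ⋙ τ = 𝟭 D)
    {F : C ⥤ D} {G : D ⥤ C} (adj : F ⊣ G) :
    conjugateEquiv
        ((adj.comp (Adjunction.ofInvolution τ hτ)).comp (Adjunction.ofInvolution τ hτ)) adj
        (eqToHom (by rw [Functor.assoc, hτ, Functor.comp_id])) =
      eqToHom (by rw [← Functor.assoc, hτ, Functor.id_comp]) := by
  refine conjugateEquiv_eqToHom _ _ _ _ ?_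
  ext X
  simp [Adjunction.comp_unit_app, Adjunction.ofInvolution, eqToHom_map]

theorem conjugateEquiv_ofInvolution_eqToHom (σ : C ⥤ C) (hσ : σ ⋙ σ = 𝟭 C) (τ : D ⥤ D)
    (hτ : τ ⋙ τ = 𝟭 D) {F : C ⥤ D} {G : D ⥤ C} (adj : F ⊣ G) :
    conjugateEquiv
        ((adj.comp (Adjunction.ofInvolution τ hτ)).comp (Adjunction.ofInvolution τ hτ))
        ((Adjunction.ofInvolution σ hσ).comp ((Adjunction.ofInvolution σ hσ).comp adj))
        (eqToHom (involution_comp_comp_eq hσ hτ F)) =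
      eqToHom (involution_comp_comp_eq hτ hσ G) := by
  rw [← eqToHom_trans (by rw [← Functor.assoc, hσ, Functor.id_comp] : σ ⋙ σ ⋙ F = F)
      (by rw [Functor.assoc, hτ, Functor.comp_id]),
    ← conjugateEquiv_comp _ adj, conjugateEquiv_comp_ofInvolution_eqToHom,
    conjugateEquiv_ofInvolution_comp_eqToHom, eqToHom_trans]

theorem whiskerLeft_comp_whiskerRight_eq_eqToHom_iff {σ : C ⥤ C} (hσ : σ ⋙ σ = 𝟭 C)
    {τ : D ⥤ D} (hτ : τ ⋙ τ = 𝟭 D) {F : C ⥤ D} (α : σ ⋙ F ⟶ F ⋙ τ) :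
    whiskerLeft σ α ≫ whiskerRight α τ =
        eqToHom (involution_comp_comp_eq hσ hτ F) ↔
      ∀ A : C, eqToHom (congrArg F.obj (sq_obj σ hσ A)).symm ≫ α.app (σ.obj A) ≫
        τ.map (α.app A) ≫ eqToHom (sq_obj τ hτ (F.obj A)) = 𝟙 (F.obj A) := by
  rw [NatTrans.ext_iff, funext_iff]
  refine forall_congr' fun A => ?_
  rw [eqToHom_comp_iff, ← Category.assoc, comp_eqToHom_iff]
  simp

theorem whiskerLeft_comp_whiskerRight_eq_eqToHom_iff_conjugateEquiv (σ : C ⥤ C)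
    (hσ : σ ⋙ σ = 𝟭 C) (τ : D ⥤ D) (hτ : τ ⋙ τ = 𝟭 D) {F : C ⥤ D} {G : D ⥤ C} (adj : F ⊣ G)
    (α : σ ⋙ F ⟶ F ⋙ τ) :
    whiskerLeft σ α ≫ whiskerRight α τ =
        eqToHom (involution_comp_comp_eq hσ hτ F) ↔
      whiskerLeft τ (conjugateEquiv (adj.comp (Adjunction.ofInvolution τ hτ))
          ((Adjunction.ofInvolution σ hσ).comp adj) α) ≫
        whiskerRight (conjugateEquiv (adj.comp (Adjunction.ofInvolution τ hτ))
          ((Adjunction.ofInvolution σ hσ).comp adj) α) σ =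
        eqToHom (involution_comp_comp_eq hτ hσ G) := by
  rw [← (conjugateEquiv _ ((Adjunction.ofInvolution σ hσ).comp
      ((Adjunction.ofInvolution σ hσ).comp adj))).apply_eq_iff_eq,
    conjugateEquiv_whiskerLeft_comp_whiskerRight, conjugateEquiv_ofInvolution_eqToHom]

end Involution

end CategoryTheory

open SkewTest in
/-- **Statement 11.** For an adjunction `F ⊣ G` between categories with involution
`(C, σ)` and `(D, τ)`, there is a natural transformation `α : Fσ → τF` with
`τα ∘ ασ = id_F` if and only if there is a natural transformation `β : Gτ → σG` with
`σβ ∘ βτ = id_G`. -/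
theorem involutary_structure_transfers_along_adjunction {C : Type u} [Category.{v} C]
    {D : Type u₂} [Category.{v₂} D] (σ : C ⥤ C) (hσ : σ ⋙ σ = 𝟭 C)
    (τ : D ⥤ D) (hτ : τ ⋙ τ = 𝟭 D) (F : C ⥤ D) (G : D ⥤ C) (adj : F ⊣ G) :
    (∃ α : σ ⋙ F ⟶ F ⋙ τ, ∀ A : C,
        eqToHom (congrArg F.obj (sq_obj σ hσ A)).symm ≫ α.app (σ.obj A) ≫ τ.map (α.app A) ≫
          eqToHom (sq_obj τ hτ (F.obj A)) = 𝟙 (F.obj A)) ↔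
    (∃ β : τ ⋙ G ⟶ G ⋙ σ, ∀ B : D,
        eqToHom (congrArg G.obj (sq_obj τ hτ B)).symm ≫ β.app (τ.obj B) ≫ σ.map (β.app B) ≫
          eqToHom (sq_obj σ hσ (G.obj B)) = 𝟙 (G.obj B)) := by
  calc
    _ ↔ ∃ α : σ ⋙ F ⟶ F ⋙ τ, whiskerLeft σ α ≫ whiskerRight α τ = eqToHom _ :=
      exists_congr fun α => (whiskerLeft_comp_whiskerRight_eq_eqToHom_iff hσ hτ α).symm
    _ ↔ ∃ β : τ ⋙ G ⟶ G ⋙ σ, whiskerLeft τ β ≫ whiskerRight β σ = eqToHom _ :=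
      (conjugateEquiv _ _).exists_congr
        (whiskerLeft_comp_whiskerRight_eq_eqToHom_iff_conjugateEquiv σ hσ τ hτ adj)
    _ ↔ _ := exists_congr fun β => whiskerLeft_comp_whiskerRight_eq_eqToHom_iff hτ hσ β
end

section
/- Let V be a closed symmetric monoidal category, C a small V-enriched category, and F : C → V a V-functor (V regarded as enriched over itself via the closed structure). For objects c, d of C let ρ_{c,d} : F(c) ⊗ C(c, d) → F(d) denote the adjunct, under the closed structure, of the structure map C(c, d) → [F(c), F(d)]. Fix an object x of C and assume V has the coproducts ∐_{(c,d)} F(c) ⊗ C(c,d) ⊗ C(d,x) (over pairs of objects of C) and ∐_e F(e) ⊗ C(e,x) (over objects of C). Consider the two maps ∐_{(c,d)} F(c) ⊗ C(c,d) ⊗ C(d,x) ⇉ ∐_e F(e) ⊗ C(e,x): the first, given on the (c,d)-summand by id_{F(c)} ⊗ M_{c,d,x} (where M is the composition of C) followed by the coprojection of the summand e = c; the second, given on the (c,d)-summand by ρ_{c,d} ⊗ id_{C(d,x)} followed by the coprojection of the summand e = d. Then the map ∐_e F(e) ⊗ C(e, x) → F(x), given on the summand e by ρ_{e,x}, coequalizes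 this pair and exhibits F(x) as their coequalizer. In particular the coend ∫^{c} F(c) ⊗ C(c, x) exists and is isomorphic to F(x), naturally in x. -/
/-!
The parallel pair is a split coequalizer, hence a coequalizer. Both sections insert the
identity `eId V x : 𝟙 ⟶ C(x,x)`: one sends `F x` to the summand `F x ⊗ C(x,x)`, the other
sends the summand `F e ⊗ C(e,x)` to `F e ⊗ C(e,x) ⊗ C(x,x)`. The splitting identities follow
from the right unit law of `C`, the unit law of `F` and naturality of inserting a unit; that `ρ`
coequalizes the pair is the composition law of `F`.
-/

open CategoryTheory CategoryTheory.Limits MonoidalCategory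
open scoped CategoryTheory.MonoidalClosed

universe v u u₁

namespace CategoryTheory

open MonoidalClosed

namespace Limits.Cofork.IsColimit

variable {C : Type u} [Category.{v} C] {X Y Z : C} {f g : X ⟶ Y} {π : Y ⟶ Z}

def swap {w : f ≫ π = g ≫ π} (h : IsColimit (Cofork.ofπ π w)) :
    IsColimit (Cofork.ofπ π w.symm) :=
  Cofork.IsColimit.mk _ (fun s => h.desc (Cofork.ofπ s.π s.condition.symm))
    (fun s => h.fac (Cofork.ofπ s.π s.condition.symm) .one)
    (fun s _ hm => Cofork.IsColimit.hom_ext h (hm.trans (h.fac (Cofork.ofπ s.π _) .one).symm))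

end Limits.Cofork.IsColimit

section Monoidal

variable {V : Type u} [Category.{v} V] [MonoidalCategory V]

lemma whiskerLeft_rightUnitor_inv_whiskerLeft_naturality {A B H K Z : V} (u : A ⊗ H ⟶ B)
    (e : 𝟙_ V ⟶ K) (w : B ⊗ K ⟶ Z) :
    A ◁ ((ρ_ H).inv ≫ H ◁ e) ≫ (α_ A H K).inv ≫ u ▷ K ≫ w =
      u ≫ (ρ_ B).inv ≫ B ◁ e ≫ w := by
  rw [whiskerLeft_comp_assoc, associator_inv_naturality_right_assoc, whisker_exchange_assoc,
    whiskerLeft_rightUnitor_inv, Category.assoc, Iso.hom_inv_id_assoc,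
    ← rightUnitor_inv_naturality_assoc]

end Monoidal

namespace EnrichedFunctor

variable {V : Type u} [Category.{v} V] [MonoidalCategory V] [MonoidalClosed V]
  {C : Type u₁} [EnrichedCategory V C] (F : EnrichedFunctor V C V)

lemma uncurry_map_comp (c d x : C) :
    F.obj c ◁ eComp V c d x ≫ uncurry (F.map c x) =
      (α_ (F.obj c) (c ⟶[V] d) (d ⟶[V] x)).inv ≫ uncurry (F.map c d) ▷ (d ⟶[V] x) ≫
        uncurry (F.map d x) := by
  rw [← uncurry_natural_left, F.map_comp]
  change uncurry ((F.map c d ⊗ₘ F.map d x) ≫ MonoidalClosed.comp _ _ _) = _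
  rw [comp_eq, ← curry_natural_left, uncurry_curry, compTranspose_eq]
  simp only [uncurry_eq, MonoidalCategory.tensorHom_def]
  simp only [whiskerLeft_comp, comp_whiskerRight, Category.assoc]
  dsimp only [enrichedCategorySelf, EnrichedCategory.Hom]
  rw [associator_inv_naturality_right_assoc, whisker_exchange_assoc,
    associator_inv_naturality_middle_assoc]
  rfl

lemma uncurry_map_id (x : C) :
    (ρ_ (F.obj x)).inv ≫ F.obj x ◁ eId V x ≫ uncurry (F.map x x) = 𝟙 (F.obj x) := by
  rw [← uncurry_natural_left, F.map_id]
  change (ρ_ (F.obj x)).inv ≫ uncurry (MonoidalClosed.id (F.obj x)) = _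
  rw [MonoidalClosed.id_eq, uncurry_curry, Iso.inv_hom_id]

variable (x : C)
  [HasCoproduct (fun p : C × C => F.obj p.1 ⊗ ((p.1 ⟶[V] p.2) ⊗ (p.2 ⟶[V] x)))]
  [HasCoproduct (fun e : C => F.obj e ⊗ (e ⟶[V] x))]

noncomputable def coYonedaCompose :
    (∐ fun p : C × C => F.obj p.1 ⊗ ((p.1 ⟶[V] p.2) ⊗ (p.2 ⟶[V] x))) ⟶
      ∐ fun e : C => F.obj e ⊗ (e ⟶[V] x) :=
  Limits.Sigma.desc fun p => F.obj p.1 ◁ eComp V p.1 p.2 x ≫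
    Limits.Sigma.ι (fun e => F.obj e ⊗ (e ⟶[V] x)) p.1

noncomputable def coYonedaAct :
    (∐ fun p : C × C => F.obj p.1 ⊗ ((p.1 ⟶[V] p.2) ⊗ (p.2 ⟶[V] x))) ⟶
      ∐ fun e : C => F.obj e ⊗ (e ⟶[V] x) :=
  Limits.Sigma.desc fun p => (α_ (F.obj p.1) (p.1 ⟶[V] p.2) (p.2 ⟶[V] x)).inv ≫
    uncurry (F.map p.1 p.2) ▷ (p.2 ⟶[V] x) ≫
      Limits.Sigma.ι (fun e => F.obj e ⊗ (e ⟶[V] x)) p.2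

noncomputable def coYonedaDesc : (∐ fun e : C => F.obj e ⊗ (e ⟶[V] x)) ⟶ F.obj x :=
  Limits.Sigma.desc fun e => uncurry (F.map e x)

noncomputable def isSplitCoequalizerCoYoneda :
    IsSplitCoequalizer (F.coYonedaAct x) (F.coYonedaCompose x) (F.coYonedaDesc x) where
  rightSection := (ρ_ (F.obj x)).inv ≫ F.obj x ◁ eId V x ≫
    Limits.Sigma.ι (fun e => F.obj e ⊗ (e ⟶[V] x)) x
  leftSection := Limits.Sigma.desc fun e =>
    F.obj e ◁ ((ρ_ (e ⟶[V] x)).inv ≫ (e ⟶[V] x) ◁ eId V x) ≫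
      Limits.Sigma.ι (fun p : C × C => F.obj p.1 ⊗ ((p.1 ⟶[V] p.2) ⊗ (p.2 ⟶[V] x))) (e, x)
  condition := Sigma.hom_ext _ _ fun p => by
    simp only [coYonedaCompose, coYonedaAct, coYonedaDesc, colimit.ι_desc_assoc,
      Cofan.mk_ι_app, Category.assoc, colimit.ι_desc]
    exact (F.uncurry_map_comp p.1 p.2 x).symm
  rightSection_π := by
    simp only [coYonedaDesc, Category.assoc, colimit.ι_desc, Cofan.mk_ι_app]
    exact F.uncurry_map_id x
  leftSection_bottom := Sigma.hom_ext _ _ fun e => by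
    simp only [coYonedaCompose, colimit.ι_desc_assoc, Cofan.mk_ι_app, Category.assoc,
      colimit.ι_desc, Category.comp_id]
    rw [← whiskerLeft_comp_assoc, Category.assoc, e_comp_id, whiskerLeft_id, Category.id_comp]
  leftSection_top := Sigma.hom_ext _ _ fun e => by
    simp only [coYonedaAct, coYonedaDesc, colimit.ι_desc_assoc, Cofan.mk_ι_app,
      Category.assoc, colimit.ι_desc]
    exact whiskerLeft_rightUnitor_inv_whiskerLeft_naturality _ _ _

end EnrichedFunctor

end CategoryTheory

theorem enriched_coYoneda_general (V : Type u) [Category.{v} V] [MonoidalCategory V]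
    [MonoidalClosed V]
    (C : Type u₁) [EnrichedCategory V C] (F : EnrichedFunctor V C V) (x : C)
    [HasCoproduct (fun p : C × C => F.obj p.1 ⊗ ((p.1 ⟶[V] p.2) ⊗ (p.2 ⟶[V] x)))]
    [HasCoproduct (fun e : C => F.obj e ⊗ (e ⟶[V] x))] :
    ∃ hco :
      (Sigma.desc (fun p : C × C =>
          (F.obj p.1 ◁ eComp V p.1 p.2 x) ≫
            Sigma.ι (fun e : C => F.obj e ⊗ (e ⟶[V] x)) p.1)) ≫
        (Sigma.desc fun e : C => MonoidalClosed.uncurry (F.map e x)) =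
      (Sigma.desc (fun p : C × C =>
          (α_ (F.obj p.1) (p.1 ⟶[V] p.2) (p.2 ⟶[V] x)).inv ≫
            (MonoidalClosed.uncurry (F.map p.1 p.2) ▷ (p.2 ⟶[V] x)) ≫
            Sigma.ι (fun e : C => F.obj e ⊗ (e ⟶[V] x)) p.2)) ≫
        (Sigma.desc fun e : C => MonoidalClosed.uncurry (F.map e x)),
      Nonempty (IsColimit (Cofork.ofπ
        (Sigma.desc fun e : C => MonoidalClosed.uncurry (F.map e x)) hco)) :=
  let split := F.isSplitCoequalizerCoYoneda x
  ⟨split.condition.symm, ⟨Cofork.IsColimit.swap split.isCoequalizer⟩⟩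

/-- **Statement 12** (enriched co-Yoneda).  Let `V` be a closed symmetric monoidal category,
`C` a small `V`-category and `F : C ⥤ V` a `V`-functor (`V` enriched in itself via the
closed structure), with `ρ_{c,d} : F c ⊗ C(c,d) ⟶ F d` the adjunct of the structure map.
Given the displayed coproducts, the map `∐_e F e ⊗ C(e,x) ⟶ F x` with components
`ρ_{e,x}` coequalizes the two canonical maps from `∐_{(c,d)} F c ⊗ C(c,d) ⊗ C(d,x)`
(one via composition in `C`, one via the action `ρ` on `F`), and exhibits `F x` as their
coequalizer; in particular the coend `∫^c F c ⊗ C(c, x)` exists and is isomorphic to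
`F x`. -/
theorem enriched_coYoneda (V : Type u) [Category.{v} V] [MonoidalCategory V]
    [SymmetricCategory V] [MonoidalClosed V]
    (C : Type u₁) [EnrichedCategory V C] (F : EnrichedFunctor V C V) (x : C)
    [HasCoproduct (fun p : C × C => F.obj p.1 ⊗ ((p.1 ⟶[V] p.2) ⊗ (p.2 ⟶[V] x)))]
    [HasCoproduct (fun e : C => F.obj e ⊗ (e ⟶[V] x))] :
    ∃ hco :
      (Sigma.desc (fun p : C × C =>
          (F.obj p.1 ◁ eComp V p.1 p.2 x) ≫
            Sigma.ι (fun e : C => F.obj e ⊗ (e ⟶[V] x)) p.1)) ≫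
        (Sigma.desc fun e : C => MonoidalClosed.uncurry (F.map e x)) =
      (Sigma.desc (fun p : C × C =>
          (α_ (F.obj p.1) (p.1 ⟶[V] p.2) (p.2 ⟶[V] x)).inv ≫
            (MonoidalClosed.uncurry (F.map p.1 p.2) ▷ (p.2 ⟶[V] x)) ≫
            Sigma.ι (fun e : C => F.obj e ⊗ (e ⟶[V] x)) p.2)) ≫
        (Sigma.desc fun e : C => MonoidalClosed.uncurry (F.map e x)),
      Nonempty (IsColimit (Cofork.ofπ
        (Sigma.desc fun e : C => MonoidalClosed.uncurry (F.map e x)) hco)) :=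
  enriched_coYoneda_general V C F x
end
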